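/- If every student has requirement 1 for every topic in a set T₀ ⊆ T and requirement M for all other topics, where M > d, then any benefit-optimal schedule of length d ≤ |T₀| for a nonempty group uses only topics from T₀, each at most once, and achieves benefit |P|·d. -/

import Mathlib

/-!
Since every requirement is at least `1`, a topic taught `k` times contributes at most `k` to each
student's benefit, so every schedule of length `d` has benefit at most `|P|·d`; scheduling `d`
distinct topics of `T₀` once each attains this bound, so an optimal schedule attains it too.
Attaining it forces equality in every term, i.e. `c t * req ≤ 1`, which rules out a topic of
requirement `M ≥ 2` and any repeated topic.
-/

lemma min_div_le_self (k : ℕ) {r : ℕ} (hr : 1 ≤ r) : min (k : ℝ) r / r ≤ k :=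
  (div_le_self (by positivity) (by exact_mod_cast hr)).trans (min_le_left _ _)

lemma min_eq_mul_iff_mul_le_one {k r : ℕ} (hr : 1 ≤ r) : min k r = k * r ↔ k * r ≤ 1 := by
  constructor
  · intro h
    have hk : k * r ≤ k := h ▸ min_le_left k r
    have hr' : k * r ≤ r := h ▸ min_le_right k r
    nlinarith
  · intro h
    have hk : k ≤ 1 := (Nat.le_mul_of_pos_right k hr).trans h
    interval_cases k
    · simp
    · obtain rfl : r = 1 := by omega
      rfl

lemma min_div_eq_self_iff {k r : ℕ} (hr : 1 ≤ r) : min (k : ℝ) r / r = k ↔ k * r ≤ 1 := by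
  rw [div_eq_iff (by positivity), ← min_eq_mul_iff_mul_le_one hr]
  exact_mod_cast Iff.rfl

lemma eq_zero_of_mul_le_one_of_lt {k M : ℕ} (h : k * M ≤ 1) (hk : k < M) : k = 0 := by
  nlinarith

section

open Finset

variable {S T : Type*} [Fintype T]

noncomputable def benefit (P : Finset S) (req : S → T → ℕ) (c : T → ℕ) : ℝ :=
  ∑ t, ∑ s ∈ P, min (c t : ℝ) (req s t) / req s t

lemma card_mul_sum_eq_sum_sum (P : Finset S) (c : T → ℕ) :
    (P.card : ℝ) * ∑ t, c t = ∑ t, ∑ _s ∈ P, (c t : ℝ) := by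
  simp [mul_sum]

variable {P : Finset S} {req : S → T → ℕ}

lemma benefit_le_card_mul_sum (hreq : ∀ s ∈ P, ∀ t, 1 ≤ req s t) (c : T → ℕ) :
    benefit P req c ≤ P.card * ∑ t, c t := by
  rw [card_mul_sum_eq_sum_sum]
  exact sum_le_sum fun t _ => sum_le_sum fun s hs => min_div_le_self _ (hreq s hs t)

lemma benefit_eq_card_mul_sum_iff (hreq : ∀ s ∈ P, ∀ t, 1 ≤ req s t) (c : T → ℕ) :
    benefit P req c = P.card * ∑ t, c t ↔ ∀ t, ∀ s ∈ P, c t * req s t ≤ 1 := by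
  rw [card_mul_sum_eq_sum_sum, benefit,
    sum_eq_sum_iff_of_le fun t _ => sum_le_sum fun s hs => min_div_le_self _ (hreq s hs t)]
  refine forall_congr' fun t => ?_
  rw [sum_eq_sum_iff_of_le fun s hs => min_div_le_self _ (hreq s hs t)]
  simp only [mem_univ, true_implies]
  exact forall₂_congr fun s hs => min_div_eq_self_iff (hreq s hs t)

lemma benefit_indicator [DecidableEq T] {A : Finset T} (hA : ∀ s ∈ P, ∀ t ∈ A, req s t = 1) :
    benefit P req (fun t => if t ∈ A then 1 else 0) = P.card * A.card := by
  calc _ = ∑ t, if t ∈ A then (P.card : ℝ) else 0 := by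
        refine sum_congr rfl fun t _ => ?_
        split_ifs with ht
        · rw [sum_congr rfl fun s hs => by rw [hA s hs t ht]]
          simp [ht]
        · simp [ht]
    _ = P.card * A.card := by simp [mul_comm]

end

/-- If every student has requirement `1` on topics in `T₀` and a huge
requirement `M` elsewhere, then any benefit-optimal schedule of length
`d ≤ |T₀|` for a nonempty group uses only topics from `T₀`, each at most once,
and achieves benefit `|P|·d`. -/
theorem optimal_schedule_uses_easy_topics {S T : Type*} [Fintype T] [DecidableEq T]
    (P : Finset S) (hP : P.Nonempty) (T₀ : Finset T) (d : ℕ) (hd : d ≤ T₀.card)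
    (M : ℕ) (hM : d * P.card * Fintype.card T < M)
    (c : T → ℕ) (hsum : ∑ t, c t = d)
    (hopt : ∀ c' : T → ℕ, (∑ t, c' t) = d →
      (∑ t, ∑ s ∈ P, (min (c' t) (if t ∈ T₀ then 1 else M) : ℝ) /
          ((if t ∈ T₀ then 1 else M : ℕ) : ℝ))
        ≤ ∑ t, ∑ s ∈ P, (min (c t) (if t ∈ T₀ then 1 else M) : ℝ) /
          ((if t ∈ T₀ then 1 else M : ℕ) : ℝ)) :
    (∀ t ∉ T₀, c t = 0) ∧ (∀ t, c t ≤ 1) ∧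
      (∑ t, ∑ s ∈ P, (min (c t) (if t ∈ T₀ then 1 else M) : ℝ) /
          ((if t ∈ T₀ then 1 else M : ℕ) : ℝ))
        = (P.card : ℝ) * d := by
  set req : S → T → ℕ := fun _ t => if t ∈ T₀ then 1 else M
  have hbenefit : ∀ c' : T → ℕ, (∑ t, ∑ s ∈ P, (min (c' t) (if t ∈ T₀ then 1 else M) : ℝ) /
      ((if t ∈ T₀ then 1 else M : ℕ) : ℝ)) = benefit P req c' := fun c' => by
    simp only [benefit, req, Nat.cast_ite, Nat.cast_one]
  simp only [hbenefit] at hopt ⊢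
  have hreq : ∀ s ∈ P, ∀ t, 1 ≤ req s t := fun _ _ _ => by
    dsimp only [req]
    split_ifs <;> omega
  obtain ⟨A, hAT₀, hAcard⟩ := Finset.exists_subset_card_eq hd
  have hmax : benefit P req c = P.card * d := le_antisymm
    (hsum ▸ benefit_le_card_mul_sum hreq c)
    (hAcard ▸ benefit_indicator (fun _ _ t ht => if_pos (hAT₀ ht)) ▸ hopt _ (by simp [hAcard]))
  obtain ⟨s, hs⟩ := hP
  have hsat : ∀ t, c t * req s t ≤ 1 := fun t =>
    (benefit_eq_card_mul_sum_iff hreq c).mp (hsum ▸ hmax) t s hs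
  refine ⟨fun t ht => ?_, fun t => (Nat.le_mul_of_pos_right _ (hreq s hs t)).trans (hsat t), hmax⟩
  have hct : c t ≤ d := hsum ▸ Finset.single_le_sum (by simp) (Finset.mem_univ t)
  have hdM : d < M := calc
    d ≤ d * P.card * Fintype.card T := Nat.le_mul_of_pos_right _ (Fintype.card_pos_iff.mpr ⟨t⟩)
      |>.trans' (Nat.le_mul_of_pos_right _ (Finset.card_pos.mpr ⟨s, hs⟩))
    _ < M := hM
  exact eq_zero_of_mul_le_one_of_lt (by simpa [req, ht] using hsat t) (hct.trans_lt hdM)
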